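/- There exists a real constant c ≠ 0, independent of k and l, such that for all k, l ∈ ℤ²₊ with k ≠ l the vector field b(e_k⁰, e_l¹) − b(e_l¹, e_k⁰) + b(e_l⁰, e_k¹) − b(e_k¹, e_l⁰) equals a(k,l) · c · |k−l| · e⁰_{k−l} modulo a gradient. (This is the first identity of the magnetic-direction Lie bracket lemma: Z_{k,l}^{0,1} + Z_{l,k}^{0,1} = a c |k−l| σ⁰_{k−l}.) -/
import Mathlib


/-- Euclidean norm of an integer lattice vector `k ∈ ℤ²`. -/
noncomputable def knorm (k : ℤ × ℤ) : ℝ := Real.sqrt ((k.1 : ℝ) ^ 2 + (k.2 : ℝ) ^ 2)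

/-- The phase `k ⋅ x = k₁ x₁ + k₂ x₂`. -/
noncomputable def phase (k : ℤ × ℤ) (x : ℝ × ℝ) : ℝ := (k.1 : ℝ) * x.1 + (k.2 : ℝ) * x.2

/-- The divergence-free trigonometric vector field
`e_k⁰(x) = |k|⁻¹ (k₂, −k₁) cos(k ⋅ x)`. -/
noncomputable def e0 (k : ℤ × ℤ) (x : ℝ × ℝ) : ℝ × ℝ :=
  (((k.2 : ℝ) / knorm k) * Real.cos (phase k x),
   ((-(k.1 : ℝ)) / knorm k) * Real.cos (phase k x))

/-- The divergence-free trigonometric vector field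
`e_k¹(x) = |k|⁻¹ (−k₂, k₁) sin(k ⋅ x)`. -/
noncomputable def e1 (k : ℤ × ℤ) (x : ℝ × ℝ) : ℝ × ℝ :=
  (((-(k.2 : ℝ)) / knorm k) * Real.sin (phase k x),
   ((k.1 : ℝ) / knorm k) * Real.sin (phase k x))

/-- The advection operator `b(u,v) = (u ⋅ ∇)v`, i.e. the derivative of `v`
in the direction `u(x)`. -/
noncomputable def advect (u v : ℝ × ℝ → ℝ × ℝ) (x : ℝ × ℝ) : ℝ × ℝ :=
  fderiv ℝ v x (u x)

/-- The coefficient `a(k,l) = ⟨k, l^⊥⟩ / (|k| |l|)` with `l^⊥ = (−l₂, l₁)`. -/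
noncomputable def acoef (k l : ℤ × ℤ) : ℝ :=
  ((k.1 : ℝ) * (-(l.2 : ℝ)) + (k.2 : ℝ) * (l.1 : ℝ)) / (knorm k * knorm l)

/-- The half lattice `ℤ²₊ = {j ∈ ℤ² \ {0} : j₁ > 0, or j₁ = 0 and j₂ > 0}`. -/
def Zpos : Set (ℤ × ℤ) := {j | 0 < j.1 ∨ (j.1 = 0 ∧ 0 < j.2)}

/-- `F` equals `G` modulo a gradient: there exists a smooth `2π`-periodic
function `p : ℝ² → ℝ` with `F = G + ∇p`. -/
def EqModGrad (F G : ℝ × ℝ → ℝ × ℝ) : Prop :=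
  ∃ p : ℝ × ℝ → ℝ, ContDiff ℝ (⊤ : ℕ∞) p ∧
    (∀ x : ℝ × ℝ, p (x.1 + 2 * Real.pi, x.2) = p x ∧ p (x.1, x.2 + 2 * Real.pi) = p x) ∧
    ∀ x : ℝ × ℝ, F x = G x + (fderiv ℝ p x (1, 0), fderiv ℝ p x (0, 1))


noncomputable def phaseL (l : ℤ × ℤ) : (ℝ × ℝ) →L[ℝ] ℝ :=
  (l.1:ℝ) • ContinuousLinearMap.fst ℝ ℝ ℝ + (l.2:ℝ) • ContinuousLinearMap.snd ℝ ℝ ℝ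

lemma phaseL_apply (l : ℤ × ℤ) (v : ℝ × ℝ) : phaseL l v = (l.1:ℝ)*v.1 + (l.2:ℝ)*v.2 := by
  simp [phaseL, smul_eq_mul]

lemma hasFDerivAt_phase (l : ℤ × ℤ) (x : ℝ × ℝ) : HasFDerivAt (phase l) (phaseL l) x := by
  have h : phase l = fun y : ℝ × ℝ => phaseL l y := by
    funext y; simp [phase, phaseL, smul_eq_mul]
  rw [h]
  exact (phaseL l).hasFDerivAt

lemma hasFDerivAt_cos_phase (l : ℤ × ℤ) (x : ℝ × ℝ) :
    HasFDerivAt (fun y => Real.cos (phase l y)) ((-Real.sin (phase l x)) • phaseL l) x :=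
  (Real.hasDerivAt_cos (phase l x)).comp_hasFDerivAt x (hasFDerivAt_phase l x)

lemma hasFDerivAt_sin_phase (l : ℤ × ℤ) (x : ℝ × ℝ) :
    HasFDerivAt (fun y => Real.sin (phase l y)) ((Real.cos (phase l x)) • phaseL l) x :=
  (Real.hasDerivAt_sin (phase l x)).comp_hasFDerivAt x (hasFDerivAt_phase l x)

lemma hasFDerivAt_e0 (k : ℤ × ℤ) (x : ℝ × ℝ) :
    HasFDerivAt (e0 k)
      (((((k.2:ℝ) / knorm k) * (-Real.sin (phase k x))) • phaseL k).prod
       ((((-(k.1:ℝ)) / knorm k) * (-Real.sin (phase k x))) • phaseL k)) x := by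
  apply HasFDerivAt.prodMk
  · have := (hasFDerivAt_cos_phase k x).const_mul ((k.2:ℝ) / knorm k)
    rwa [smul_smul] at this
  · have := (hasFDerivAt_cos_phase k x).const_mul ((-(k.1:ℝ)) / knorm k)
    rwa [smul_smul] at this

lemma hasFDerivAt_e1 (k : ℤ × ℤ) (x : ℝ × ℝ) :
    HasFDerivAt (e1 k)
      (((((-(k.2:ℝ)) / knorm k) * (Real.cos (phase k x))) • phaseL k).prod
       ((((k.1:ℝ) / knorm k) * (Real.cos (phase k x))) • phaseL k)) x := by
  apply HasFDerivAt.prodMk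
  · have := (hasFDerivAt_sin_phase k x).const_mul ((-(k.2:ℝ)) / knorm k)
    rwa [smul_smul] at this
  · have := (hasFDerivAt_sin_phase k x).const_mul ((k.1:ℝ) / knorm k)
    rwa [smul_smul] at this

lemma advect_apply {v : ℝ × ℝ → ℝ × ℝ} {F : (ℝ × ℝ) →L[ℝ] ℝ × ℝ} {x : ℝ × ℝ}
    (u : ℝ × ℝ → ℝ × ℝ) (h : HasFDerivAt v F x) : advect u v x = F (u x) := by
  unfold advect; rw [h.fderiv]

lemma knorm_ne_zero {j : ℤ × ℤ} (h : j ≠ 0) : knorm j ≠ 0 := by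
  have hj : j.1 ≠ 0 ∨ j.2 ≠ 0 := by
    by_contra hc
    push_neg at hc
    exact h (Prod.ext hc.1 hc.2)
  have h2 : (0:ℝ) < (j.1:ℝ)^2 + (j.2:ℝ)^2 := by
    rcases hj with h1 | h1
    · have : ((j.1:ℝ)) ≠ 0 := Int.cast_ne_zero.mpr h1
      nlinarith [sq_nonneg ((j.2:ℝ)), sq_abs ((j.1:ℝ)), abs_pos.mpr this]
    · have : ((j.2:ℝ)) ≠ 0 := Int.cast_ne_zero.mpr h1
      nlinarith [sq_nonneg ((j.1:ℝ)), sq_abs ((j.2:ℝ)), abs_pos.mpr this]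
  exact ne_of_gt (Real.sqrt_pos.mpr h2)

lemma Zpos_ne_zero {j : ℤ × ℤ} (h : j ∈ Zpos) : j ≠ 0 := by
  rintro rfl
  simp [Zpos] at h

theorem magnetic_lie_bracket_sum_plus :
    ∃ c : ℝ, c ≠ 0 ∧ ∀ k l : ℤ × ℤ, k ∈ Zpos → l ∈ Zpos → k ≠ l →
      EqModGrad
        (fun x => advect (e0 k) (e1 l) x - advect (e1 l) (e0 k) x + advect (e0 l) (e1 k) x - advect (e1 k) (e0 l) x)
        (fun x => (acoef k l * c * (knorm (k - l))) • e0 (k - l) x) := by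
  refine ⟨1, one_ne_zero, fun k l hk hl hkl => ?_⟩
  have hK : knorm k ≠ 0 := knorm_ne_zero (Zpos_ne_zero hk)
  have hL : knorm l ≠ 0 := knorm_ne_zero (Zpos_ne_zero hl)
  have hM : knorm (k - l) ≠ 0 := knorm_ne_zero (sub_ne_zero.mpr hkl)
  refine ⟨fun _ => 0, contDiff_const, fun x => ⟨rfl, rfl⟩, fun x => ?_⟩
  have hgrad : fderiv ℝ (fun _ : ℝ × ℝ => (0:ℝ)) x = 0 := fderiv_const_apply 0
  beta_reduce
  rw [advect_apply (e0 k) (hasFDerivAt_e1 l x),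
      advect_apply (e1 l) (hasFDerivAt_e0 k x),
      advect_apply (e0 l) (hasFDerivAt_e1 k x),
      advect_apply (e1 k) (hasFDerivAt_e0 l x), hgrad]
  have hphase : phase (k - l) x = phase k x - phase l x := by
    simp only [phase, Prod.fst_sub, Prod.snd_sub]
    push_cast
    ring
  have hsub1 : ((k - l).1 : ℝ) = (k.1 : ℝ) - (l.1 : ℝ) := by push_cast [Prod.fst_sub]; ring
  have hsub2 : ((k - l).2 : ℝ) = (k.2 : ℝ) - (l.2 : ℝ) := by push_cast [Prod.snd_sub]; ring
  simp only [ContinuousLinearMap.prod_apply, ContinuousLinearMap.coe_smul',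
    Pi.smul_apply, smul_eq_mul, phaseL_apply, e0, e1, acoef, hphase, Real.cos_sub,
    hsub1, hsub2, Prod.mk_sub_mk, Prod.mk_add_mk, Prod.smul_mk,
    ContinuousLinearMap.zero_apply, Prod.mk.injEq]
  constructor <;> · field_simp; ring
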